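/- arXiv:2403.15460 — 4 statements merged into one kernel-verified Lean document; each statement's English description precedes it below -/
import Mathlib

section
/- Let V be an (n+1)-dimensional real vector space with Galilei structure (τ, h) and v a unit timelike vector. Then there exists a unique symmetric bilinear form h_v on V (the covariant space metric with respect to v) such that h_v(v, ·) = 0 and such that, viewing h as a map V* → V and h_v as a map V → V*, the composition h ∘ h_v equals the spatial projector P (where P(X) = X − τ(X)v). -/
/-!
Since `τ (h α) = α (h τ) = 0`, the map `h` takes values in `ker τ`; its kernel is the line
spanned by `τ`, so by rank–nullity its range is all of `ker τ`. As the spatial projector `P`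
also takes values in `ker τ`, it lifts through `h` to some `g₀ : V → V*`, and subtracting
`g₀(X)(v) • τ` normalises the lift to vanish on `v` without changing `h ∘ g₀`. On covectors
vanishing on `v` the map `h` is injective, which gives uniqueness, and symmetry follows from
`g X Y = g X (P Y) = g X (h (g Y)) = g Y (h (g X)) = g Y X`.
-/

open Module LinearMap

namespace GalileiStructure

variable {K V : Type*} [Field K] [AddCommGroup V] [Module K V]
  {τ : Dual K V} {h : Dual K V →ₗ[K] V} {v : V}

variable (τ v) in
def spatialProjector : V →ₗ[K] V :=
  LinearMap.id - τ.smulRight v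

@[simp]
theorem spatialProjector_apply (X : V) : spatialProjector τ v X = X - τ X • v :=
  rfl

theorem range_le_ker (hsymm : ∀ α β : Dual K V, α (h β) = β (h α)) (hτh : h τ = 0) :
    range h ≤ ker τ := by
  rintro _ ⟨α, rfl⟩
  rw [mem_ker, hsymm, hτh, map_zero]

theorem ker_eq_span (hτh : h τ = 0) (hker : ∀ α : Dual K V, h α = 0 → ∃ c : K, α = c • τ) :
    ker h = K ∙ τ := by
  ext α
  rw [mem_ker, Submodule.mem_span_singleton]
  constructor
  · intro hα
    obtain ⟨c, rfl⟩ := hker α hα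
    exact ⟨c, rfl⟩
  · rintro ⟨c, rfl⟩
    rw [map_smul, hτh, smul_zero]

theorem range_eq_ker [FiniteDimensional K V] (hsymm : ∀ α β : Dual K V, α (h β) = β (h α))
    (hτh : h τ = 0) (hker : ∀ α : Dual K V, h α = 0 → ∃ c : K, α = c • τ) (hτ : τ ≠ 0) :
    range h = ker τ := by
  refine Submodule.eq_of_le_of_finrank_eq (range_le_ker hsymm hτh) ?_
  have hrank := finrank_range_add_finrank_ker h
  rw [ker_eq_span hτh hker, finrank_span_singleton hτ, Subspace.dual_finrank_eq] at hrank
  have := τ.finrank_ker_add_one_of_ne_zero hτ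
  omega

theorem eq_of_map_eq_of_apply_eq_zero (hker : ∀ α : Dual K V, h α = 0 → ∃ c : K, α = c • τ)
    (hv : τ v = 1) {α β : Dual K V} (hα : α v = 0) (hβ : β v = 0) (hαβ : h α = h β) :
    α = β := by
  obtain ⟨c, hc⟩ := hker (α - β) (by rw [map_sub, hαβ, sub_self])
  have hc0 : c = 0 := by simpa [hα, hβ, hv, eq_comm] using congr($hc v)
  rw [← sub_eq_zero, hc, hc0, zero_smul]

theorem exists_comp_eq_spatialProjector_of_apply_eq_zero [FiniteDimensional K V]
    (hsymm : ∀ α β : Dual K V, α (h β) = β (h α)) (hτh : h τ = 0)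
    (hker : ∀ α : Dual K V, h α = 0 → ∃ c : K, α = c • τ) (hv : τ v = 1) :
    ∃ g : V →ₗ[K] Dual K V, (∀ X, g X v = 0) ∧ h ∘ₗ g = spatialProjector τ v := by
  have hτ : τ ≠ 0 := by
    rintro rfl
    simp at hv
  have hP : ∀ X, spatialProjector τ v X ∈ range h := fun X => by
    simp [range_eq_ker hsymm hτh hker hτ, hv]
  obtain ⟨g₀, hg₀⟩ := Module.projective_lifting_property h.rangeRestrict
    ((spatialProjector τ v).codRestrict _ hP) h.surjective_rangeRestrict
  refine ⟨g₀ - ((Dual.eval K V v) ∘ₗ g₀).smulRight τ, fun X => by simp [hv], ?_⟩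
  ext X
  simpa [hτh] using congr(($hg₀ X : V))

theorem apply_comm_of_comp_eq_spatialProjector (hsymm : ∀ α β : Dual K V, α (h β) = β (h α))
    {g : V →ₗ[K] Dual K V} (hgv : ∀ X, g X v = 0)
    (hg : h ∘ₗ g = spatialProjector τ v) (X Y : V) : g X Y = g Y X := by
  have hgP : ∀ A B, g A B = g A (h (g B)) := fun A B => by
    rw [← comp_apply h g, hg]
    simp [hgv]
  rw [hgP X Y, hgP Y X, hsymm]

end GalileiStructure

open GalileiStructure in
theorem covariant_space_metric_exists_unique_general
    {V : Type*} [AddCommGroup V] [Module ℝ V] [FiniteDimensional ℝ V]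
    (τ : Module.Dual ℝ V)
    (h : Module.Dual ℝ V →ₗ[ℝ] V)
    (hsymm : ∀ α β : Module.Dual ℝ V, α (h β) = β (h α))
    (hτh : h τ = 0)
    (hker : ∀ α : Module.Dual ℝ V, h α = 0 → ∃ c : ℝ, α = c • τ)
    (v : V) (hv : τ v = 1) :
    ∃! hcov : V →ₗ[ℝ] Module.Dual ℝ V,
      (∀ X Y : V, hcov X Y = hcov Y X) ∧ hcov v = 0 ∧
      h ∘ₗ hcov = LinearMap.id - τ.smulRight v := by
  obtain ⟨g, hgv, hg⟩ := exists_comp_eq_spatialProjector_of_apply_eq_zero hsymm hτh hker hv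
  have hg_comm := apply_comm_of_comp_eq_spatialProjector hsymm hgv hg
  refine ⟨g, ⟨hg_comm, ?_, hg⟩, ?_⟩
  · ext Y
    rw [hg_comm, hgv, LinearMap.zero_apply]
  · rintro g' ⟨hg'_comm, hg'v, hg'⟩
    refine LinearMap.ext fun X => eq_of_map_eq_of_apply_eq_zero hker hv ?_
      (hgv X) (LinearMap.congr_fun (hg'.trans hg.symm) X)
    rw [hg'_comm, hg'v, LinearMap.zero_apply]

/-- On an `(n+1)`-dimensional vector space with Galilei structure `(τ, h)`
(`h` viewed as a map `V* → V`, symmetric, positive semidefinite, with kernel spanned by `τ`),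
for each unit timelike `v` there exists a unique symmetric bilinear form `h_v` on `V`
(viewed as a map `V → V*`) with `h_v(v,·) = 0` and `h ∘ h_v = P`, the spatial projector
`P(X) = X − τ(X)·v`. -/
theorem covariant_space_metric_exists_unique
    {V : Type*} [AddCommGroup V] [Module ℝ V] [FiniteDimensional ℝ V]
    (n : ℕ) (hdim : Module.finrank ℝ V = n + 1)
    (τ : Module.Dual ℝ V) (hτ : τ ≠ 0)
    (h : Module.Dual ℝ V →ₗ[ℝ] V)
    (hsymm : ∀ α β : Module.Dual ℝ V, α (h β) = β (h α))
    (hpsd : ∀ α : Module.Dual ℝ V, 0 ≤ α (h α))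
    (hτh : h τ = 0)
    (hker : ∀ α : Module.Dual ℝ V, h α = 0 → ∃ c : ℝ, α = c • τ)
    (v : V) (hv : τ v = 1) :
    ∃! hcov : V →ₗ[ℝ] Module.Dual ℝ V,
      (∀ X Y : V, hcov X Y = hcov Y X) ∧ hcov v = 0 ∧
      h ∘ₗ hcov = LinearMap.id - τ.smulRight v :=
  covariant_space_metric_exists_unique_general τ h hsymm hτh hker v hv
end

section
/- Let (M, τ, h) be a Galilei manifold, v a unit timelike vector field, ∇ an affine connection, and h_v the covariant space metric with respect to v. Write Λ_μ^ν = ∇_μ v^ν and Q_ρ^{μν} = ∇_ρ h^{μν}. Then the covariant derivative of h_v is given by ∇_ρ h_{μν} = −2 Λ_{ρ(μ} τ_{ν)} − Q_{ρμν}, where indices are lowered with h_v. In particular, if ∇ is metric-compatible (∇τ=0, ∇h=0) and ∇v = 0, then ∇h_v = 0. -/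
/-!
Differentiating the defining identities `h_v v = 0` and `h_v h = 1 - τ ⊗ v` covariantly (Leibniz
rule, with `∇δ = 0`) gives `(∇_ρ h_v) v = -h_v Λ_ρ` and
`(∇_ρ h_v) h = -h_v Q_ρ - ∇_ρτ ⊗ v - τ ⊗ Λ_ρ`. As `h` is symmetric, transposing
`h_v h = 1 - τ ⊗ v` gives `h h_v = 1 - v ⊗ τ`, so `∇_ρ h_v = (∇_ρ h_v) h h_v + ((∇_ρ h_v) v) ⊗ τ`
and the two contractions determine `∇_ρ h_v`; the `∇τ` term drops out because `h_v v = 0`.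
-/

/-- Partial derivative `∂_μ f` of a function on `ℝ^N` (coordinate chart). -/
noncomputable def pd {N : ℕ} (μ : Fin N) (f : (Fin N → ℝ) → ℝ) (x : Fin N → ℝ) : ℝ :=
  fderiv ℝ f x (Pi.single μ 1)

/-- Covariant derivative `∇_μ τ_ν = ∂_μ τ_ν − Γ^λ_{μν} τ_λ` of a one-form, in coordinates. -/
noncomputable def covTau {N : ℕ} (Γ : (Fin N → ℝ) → Fin N → Fin N → Fin N → ℝ)
    (τ : (Fin N → ℝ) → Fin N → ℝ) (x : Fin N → ℝ) (μ ν : Fin N) : ℝ :=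
  pd μ (fun y => τ y ν) x - ∑ l, Γ x l μ ν * τ x l

/-- Covariant derivative `∇_ρ v^κ = ∂_ρ v^κ + Γ^κ_{ρλ} v^λ` of a vector field. -/
noncomputable def covVec {N : ℕ} (Γ : (Fin N → ℝ) → Fin N → Fin N → Fin N → ℝ)
    (v : (Fin N → ℝ) → Fin N → ℝ) (x : Fin N → ℝ) (ρ κ : Fin N) : ℝ :=
  pd ρ (fun y => v y κ) x + ∑ l, Γ x κ ρ l * v x l

/-- Covariant derivative `∇_ρ h^{μν}` of a contravariant 2-tensor. -/
noncomputable def covHup {N : ℕ} (Γ : (Fin N → ℝ) → Fin N → Fin N → Fin N → ℝ)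
    (h : (Fin N → ℝ) → Fin N → Fin N → ℝ) (x : Fin N → ℝ) (ρ μ ν : Fin N) : ℝ :=
  pd ρ (fun y => h y μ ν) x + (∑ l, Γ x μ ρ l * h x l ν) + ∑ l, Γ x ν ρ l * h x μ l

/-- Covariant derivative `∇_ρ h_{μν}` of a covariant 2-tensor. -/
noncomputable def covHdown {N : ℕ} (Γ : (Fin N → ℝ) → Fin N → Fin N → Fin N → ℝ)
    (hc : (Fin N → ℝ) → Fin N → Fin N → ℝ) (x : Fin N → ℝ) (ρ μ ν : Fin N) : ℝ :=
  pd ρ (fun y => hc y μ ν) x - (∑ l, Γ x l ρ μ * hc x l ν) - ∑ l, Γ x l ρ ν * hc x μ l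

open Matrix

theorem Matrix.eq_of_mulVec_add_mulVec_eq_zero_of_mul_add_mul_eq {R n : Type*} [CommRing R]
    [Fintype n] [DecidableEq n] {A H D Q : Matrix n n R} {T V Λ dT : n → R}
    (hH : Hᵀ = H) (hAV : A *ᵥ V = 0) (hAH : A * H = 1 - vecMulVec T V)
    (hDV : D *ᵥ V + A *ᵥ Λ = 0) (hDH : D * H + A * Q = -(vecMulVec dT V + vecMulVec T Λ)) :
    D = -(vecMulVec (A *ᵥ Λ) T + vecMulVec T (A *ᵥ Λ)) - A * Q * Aᵀ := by
  have hHA : H * Aᵀ = 1 - vecMulVec V T := by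
    rw [← hH, ← transpose_mul, hAH, transpose_sub, transpose_one, transpose_vecMulVec]
  calc D = D * H * Aᵀ + vecMulVec (D *ᵥ V) T := by
        rw [Matrix.mul_assoc, hHA, ← mul_vecMulVec, ← Matrix.mul_add, sub_add_cancel, mul_one]
    _ = _ := by
        rw [eq_sub_of_add_eq hDH, eq_neg_of_add_eq_zero_left hDV]
        simp only [sub_mul, neg_mul, add_mul, vecMulVec_mul, vecMul_transpose, hAV,
          vecMulVec_zero, neg_vecMulVec]
        abel

section PartialDerivative

variable {N : ℕ} {ρ : Fin N} {x : Fin N → ℝ}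

theorem pd_sum {ι : Type*} [Fintype ι] {f : ι → (Fin N → ℝ) → ℝ}
    (hf : ∀ i, DifferentiableAt ℝ (f i) x) :
    pd ρ (fun y => ∑ i, f i y) x = ∑ i, pd ρ (f i) x := by
  simp [pd, fderiv_fun_sum fun i _ => hf i]

theorem pd_mul {f g : (Fin N → ℝ) → ℝ} (hf : DifferentiableAt ℝ f x)
    (hg : DifferentiableAt ℝ g x) :
    pd ρ (fun y => f y * g y) x = pd ρ f x * g x + f x * pd ρ g x := by
  simp only [pd, fderiv_fun_mul hf hg, _root_.add_apply, _root_.smul_apply, smul_eq_mul]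
  ring

theorem pd_sub {f g : (Fin N → ℝ) → ℝ} (hf : DifferentiableAt ℝ f x)
    (hg : DifferentiableAt ℝ g x) :
    pd ρ (fun y => f y - g y) x = pd ρ f x - pd ρ g x := by
  simp [pd, fderiv_fun_sub hf hg]

theorem pd_const (c : ℝ) : pd ρ (fun _ => c) x = 0 := by
  simp [pd]

noncomputable def pdVec {m : Type*} (ρ : Fin N) (w : (Fin N → ℝ) → m → ℝ) (x : Fin N → ℝ) :
    m → ℝ :=
  fun i => pd ρ (fun y => w y i) x

noncomputable def pdMatrix {m n : Type*} (ρ : Fin N) (M : (Fin N → ℝ) → Matrix m n ℝ)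
    (x : Fin N → ℝ) : Matrix m n ℝ :=
  of fun i j => pd ρ (fun y => M y i j) x

variable {m n o : Type*}

theorem pdVec_mulVec [Fintype n] {M : (Fin N → ℝ) → Matrix m n ℝ} {w : (Fin N → ℝ) → n → ℝ}
    (hM : ∀ i j, DifferentiableAt ℝ (fun y => M y i j) x)
    (hw : ∀ j, DifferentiableAt ℝ (fun y => w y j) x) :
    pdVec ρ (fun y => M y *ᵥ w y) x = pdMatrix ρ M x *ᵥ w x + M x *ᵥ pdVec ρ w x := by
  ext i
  simp only [pdVec, pdMatrix, mulVec, dotProduct, Pi.add_apply, of_apply]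
  rw [pd_sum fun j => (hM i j).fun_mul (hw j)]
  simp only [pd_mul (hM i _) (hw _), Finset.sum_add_distrib]

theorem pdMatrix_mul [Fintype n] {M : (Fin N → ℝ) → Matrix m n ℝ}
    {M' : (Fin N → ℝ) → Matrix n o ℝ}
    (hM : ∀ i j, DifferentiableAt ℝ (fun y => M y i j) x)
    (hM' : ∀ i j, DifferentiableAt ℝ (fun y => M' y i j) x) :
    pdMatrix ρ (fun y => M y * M' y) x = pdMatrix ρ M x * M' x + M x * pdMatrix ρ M' x := by
  ext i k
  simp only [pdMatrix, mul_apply, Matrix.add_apply, of_apply]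
  rw [pd_sum fun j => (hM i j).fun_mul (hM' j k)]
  simp only [pd_mul (hM i _) (hM' _ k), Finset.sum_add_distrib]

theorem pdMatrix_vecMulVec {u : (Fin N → ℝ) → m → ℝ} {w : (Fin N → ℝ) → n → ℝ}
    (hu : ∀ i, DifferentiableAt ℝ (fun y => u y i) x)
    (hw : ∀ j, DifferentiableAt ℝ (fun y => w y j) x) :
    pdMatrix ρ (fun y => vecMulVec (u y) (w y)) x =
      vecMulVec (pdVec ρ u x) (w x) + vecMulVec (u x) (pdVec ρ w x) := by
  ext i j
  simp only [pdMatrix, pdVec, vecMulVec_apply, Matrix.add_apply, of_apply, pd_mul (hu i) (hw j)]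

theorem pdMatrix_const_sub {C : Matrix m n ℝ} {M : (Fin N → ℝ) → Matrix m n ℝ}
    (hM : ∀ i j, DifferentiableAt ℝ (fun y => M y i j) x) :
    pdMatrix ρ (fun y => C - M y) x = -pdMatrix ρ M x := by
  ext i j
  simp only [pdMatrix, Matrix.sub_apply, Matrix.neg_apply, of_apply]
  rw [pd_sub (differentiableAt_const _) (hM i j), pd_const, zero_sub]

end PartialDerivative

section CovariantDerivative

variable {N : ℕ} (Γ : (Fin N → ℝ) → Fin N → Fin N → Fin N → ℝ) (x : Fin N → ℝ) (ρ : Fin N)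

/-- `christoffel Γ x ρ κ l = Γ^κ_{ρl}`, so that `∇_ρ` acts as `∂_ρ + christoffel Γ x ρ` on
vectors and as `∂_ρ - (christoffel Γ x ρ)ᵀ` on covectors. -/
def christoffel : Matrix (Fin N) (Fin N) ℝ :=
  of fun κ l => Γ x κ ρ l

/-- The covariant derivative `∇_ρ P_μ^ν` of a `(1,1)`-tensor, with `μ` the row index. -/
noncomputable def covMixed (P : (Fin N → ℝ) → Matrix (Fin N) (Fin N) ℝ) :
    Matrix (Fin N) (Fin N) ℝ :=
  pdMatrix ρ P x - (christoffel Γ x ρ)ᵀ * P x + P x * (christoffel Γ x ρ)ᵀ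

theorem covVec_eq_pdVec_add (v : (Fin N → ℝ) → Fin N → ℝ) :
    covVec Γ v x ρ = pdVec ρ v x + christoffel Γ x ρ *ᵥ v x := by
  ext κ
  simp [covVec, pdVec, christoffel, mulVec, dotProduct]

theorem covTau_eq_pdVec_sub (τ : (Fin N → ℝ) → Fin N → ℝ) :
    covTau Γ τ x ρ = pdVec ρ τ x - (christoffel Γ x ρ)ᵀ *ᵥ τ x := by
  ext ν
  simp [covTau, pdVec, christoffel, mulVec, dotProduct]

theorem of_covHup_eq_pdMatrix_add (h : (Fin N → ℝ) → Matrix (Fin N) (Fin N) ℝ) :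
    of (covHup Γ h x ρ) =
      pdMatrix ρ h x + christoffel Γ x ρ * h x + h x * (christoffel Γ x ρ)ᵀ := by
  ext μ ν
  simp [covHup, pdMatrix, christoffel, mul_apply, mul_comm]

theorem of_covHdown_eq_pdMatrix_sub (hc : (Fin N → ℝ) → Matrix (Fin N) (Fin N) ℝ) :
    of (covHdown Γ hc x ρ) =
      pdMatrix ρ hc x - (christoffel Γ x ρ)ᵀ * hc x - hc x * christoffel Γ x ρ := by
  ext μ ν
  simp [covHdown, pdMatrix, christoffel, mul_apply, mul_comm]

theorem covTau_zero : covTau Γ (fun _ => 0) x ρ = 0 := by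
  ext ν
  simp [covTau, pd_const]

variable {Γ x ρ}

theorem covTau_mulVec {A : (Fin N → ℝ) → Matrix (Fin N) (Fin N) ℝ} {w : (Fin N → ℝ) → Fin N → ℝ}
    (hA : ∀ i j, DifferentiableAt ℝ (fun y => A y i j) x)
    (hw : ∀ j, DifferentiableAt ℝ (fun y => w y j) x) :
    covTau Γ (fun y => A y *ᵥ w y) x ρ =
      of (covHdown Γ A x ρ) *ᵥ w x + A x *ᵥ covVec Γ w x ρ := by
  rw [covTau_eq_pdVec_sub, of_covHdown_eq_pdMatrix_sub, covVec_eq_pdVec_add, pdVec_mulVec hA hw]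
  simp only [sub_mulVec, mulVec_add, mulVec_mulVec]
  abel

theorem covMixed_mul {A H : (Fin N → ℝ) → Matrix (Fin N) (Fin N) ℝ}
    (hA : ∀ i j, DifferentiableAt ℝ (fun y => A y i j) x)
    (hH : ∀ i j, DifferentiableAt ℝ (fun y => H y i j) x) :
    covMixed Γ x ρ (fun y => A y * H y) =
      of (covHdown Γ A x ρ) * H x + A x * of (covHup Γ H x ρ) := by
  rw [covMixed, of_covHdown_eq_pdMatrix_sub, of_covHup_eq_pdMatrix_add, pdMatrix_mul hA hH]
  simp only [sub_mul, Matrix.mul_add, Matrix.mul_assoc]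
  abel

theorem covMixed_one_sub_vecMulVec {τ v : (Fin N → ℝ) → Fin N → ℝ}
    (hτ : ∀ i, DifferentiableAt ℝ (fun y => τ y i) x)
    (hv : ∀ i, DifferentiableAt ℝ (fun y => v y i) x) :
    covMixed Γ x ρ (fun y => 1 - vecMulVec (τ y) (v y)) =
      -(vecMulVec (covTau Γ τ x ρ) (v x) + vecMulVec (τ x) (covVec Γ v x ρ)) := by
  rw [covMixed, covTau_eq_pdVec_sub, covVec_eq_pdVec_add,
    pdMatrix_const_sub (M := fun y => vecMulVec (τ y) (v y)) fun i j => (hτ i).fun_mul (hv j),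
    pdMatrix_vecMulVec hτ hv]
  simp only [Matrix.mul_sub, sub_mul, mul_vecMulVec, vecMulVec_mul, vecMul_transpose,
    Matrix.mul_one, Matrix.one_mul, sub_vecMulVec, vecMulVec_add]
  abel

end CovariantDerivative

theorem covariant_derivative_of_space_metric_general (n : ℕ)
    (τ : (Fin (n + 1) → ℝ) → Fin (n + 1) → ℝ)
    (h hc : (Fin (n + 1) → ℝ) → Fin (n + 1) → Fin (n + 1) → ℝ)
    (v : (Fin (n + 1) → ℝ) → Fin (n + 1) → ℝ)
    (Γ : (Fin (n + 1) → ℝ) → Fin (n + 1) → Fin (n + 1) → Fin (n + 1) → ℝ)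
    (hτsm : ∀ ν, ContDiff ℝ (⊤ : ℕ∞) fun x => τ x ν)
    (hhsm : ∀ μ ν, ContDiff ℝ (⊤ : ℕ∞) fun x => h x μ ν)
    (hhcsm : ∀ μ ν, ContDiff ℝ (⊤ : ℕ∞) fun x => hc x μ ν)
    (hvsm : ∀ μ, ContDiff ℝ (⊤ : ℕ∞) fun x => v x μ)
    (hsymm : ∀ x μ ν, h x μ ν = h x ν μ)
    (hcv : ∀ x μ, ∑ ν, hc x μ ν * v x ν = 0)
    (hch : ∀ x μ ν, ∑ κ, hc x μ κ * h x κ ν = (if μ = ν then (1 : ℝ) else 0) - τ x μ * v x ν) :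
    (∀ x ρ μ ν, covHdown Γ hc x ρ μ ν =
      -((∑ κ, covVec Γ v x ρ κ * hc x μ κ) * τ x ν
          + (∑ κ, covVec Γ v x ρ κ * hc x ν κ) * τ x μ)
        - ∑ κ, ∑ l, covHup Γ h x ρ κ l * hc x μ κ * hc x ν l) ∧
    ((∀ x μ ν, covTau Γ τ x μ ν = 0) → (∀ x ρ μ ν, covHup Γ h x ρ μ ν = 0) →
      (∀ x ρ κ, covVec Γ v x ρ κ = 0) → ∀ x ρ μ ν, covHdown Γ hc x ρ μ ν = 0) := by
  have hdiff {f : (Fin (n + 1) → ℝ) → ℝ} (hf : ContDiff ℝ (⊤ : ℕ∞) f) (x) :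
      DifferentiableAt ℝ f x :=
    (hf.differentiable (by simp)).differentiableAt
  -- Retyped as matrix-valued so that `*` is the matrix product, not the pointwise one.
  set A : (Fin (n + 1) → ℝ) → Matrix (Fin (n + 1)) (Fin (n + 1)) ℝ := hc
  set H : (Fin (n + 1) → ℝ) → Matrix (Fin (n + 1)) (Fin (n + 1)) ℝ := h
  have hAV : (fun y => A y *ᵥ v y) = fun _ => 0 := funext fun y => funext (hcv y)
  have hAH : (fun y => A y * H y) = fun y => 1 - vecMulVec (τ y) (v y) :=
    funext fun y => Matrix.ext (hch y)
  have key (x ρ) : of (covHdown Γ A x ρ) =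
      -(vecMulVec (A x *ᵥ covVec Γ v x ρ) (τ x) + vecMulVec (τ x) (A x *ᵥ covVec Γ v x ρ))
        - A x * of (covHup Γ H x ρ) * (A x)ᵀ :=
    Matrix.eq_of_mulVec_add_mulVec_eq_zero_of_mul_add_mul_eq (Matrix.ext fun μ ν => hsymm x ν μ)
      (congrFun hAV x) (congrFun hAH x)
      (by rw [← covTau_mulVec (fun i j => hdiff (hhcsm i j) x) (fun j => hdiff (hvsm j) x),
        hAV, covTau_zero])
      (by rw [← covMixed_mul (fun i j => hdiff (hhcsm i j) x) (fun i j => hdiff (hhsm i j) x),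
        hAH, covMixed_one_sub_vecMulVec (fun i => hdiff (hτsm i) x) (fun i => hdiff (hvsm i) x)])
  refine ⟨fun x ρ μ ν => ?_, fun _ hQ hV x ρ μ ν => ?_⟩
  · rw [← of_apply (covHdown Γ A x ρ) μ ν, key]
    simp only [Matrix.sub_apply, Matrix.neg_apply, Matrix.add_apply, vecMulVec_apply, mul_apply,
      transpose_apply, of_apply, mulVec, dotProduct, Finset.sum_mul]
    rw [Finset.sum_comm]
    simp only [Finset.mul_sum, mul_comm, mul_left_comm]
  · rw [← of_apply (covHdown Γ A x ρ) μ ν, key, show covVec Γ v x ρ = 0 from funext (hV x ρ),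
      show of (covHup Γ H x ρ) = 0 from Matrix.ext (hQ x ρ)]
    simp

/-- On a Galilei manifold (in local coordinates on a chart), for any affine
connection with coefficients `Γ`, writing `Λ_μ^ν = ∇_μ v^ν` and `Q_ρ^{μν} = ∇_ρ h^{μν}`, the
covariant derivative of the covariant space metric `h_v` is
`∇_ρ h_{μν} = −2 Λ_{ρ(μ} τ_{ν)} − Q_{ρμν}` (indices lowered with `h_v`); in particular if
`∇τ = 0`, `∇h = 0` and `∇v = 0` then `∇h_v = 0`. -/
theorem covariant_derivative_of_space_metric (n : ℕ)
    (τ : (Fin (n + 1) → ℝ) → Fin (n + 1) → ℝ)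
    (h hc : (Fin (n + 1) → ℝ) → Fin (n + 1) → Fin (n + 1) → ℝ)
    (v : (Fin (n + 1) → ℝ) → Fin (n + 1) → ℝ)
    (Γ : (Fin (n + 1) → ℝ) → Fin (n + 1) → Fin (n + 1) → Fin (n + 1) → ℝ)
    (hτsm : ∀ ν, ContDiff ℝ (⊤ : ℕ∞) fun x => τ x ν)
    (hhsm : ∀ μ ν, ContDiff ℝ (⊤ : ℕ∞) fun x => h x μ ν)
    (hhcsm : ∀ μ ν, ContDiff ℝ (⊤ : ℕ∞) fun x => hc x μ ν)
    (hvsm : ∀ μ, ContDiff ℝ (⊤ : ℕ∞) fun x => v x μ)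
    (hsymm : ∀ x μ ν, h x μ ν = h x ν μ)
    (hcsymm : ∀ x μ ν, hc x μ ν = hc x ν μ)
    (hτh : ∀ x σ, ∑ ρ, τ x ρ * h x ρ σ = 0)
    (hτv : ∀ x, ∑ ρ, τ x ρ * v x ρ = 1)
    (hcv : ∀ x μ, ∑ ν, hc x μ ν * v x ν = 0)
    (hch : ∀ x μ ν, ∑ κ, hc x μ κ * h x κ ν = (if μ = ν then (1 : ℝ) else 0) - τ x μ * v x ν) :
    (∀ x ρ μ ν, covHdown Γ hc x ρ μ ν =
      -((∑ κ, covVec Γ v x ρ κ * hc x μ κ) * τ x ν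
          + (∑ κ, covVec Γ v x ρ κ * hc x ν κ) * τ x μ)
        - ∑ κ, ∑ l, covHup Γ h x ρ κ l * hc x μ κ * hc x ν l) ∧
    ((∀ x μ ν, covTau Γ τ x μ ν = 0) → (∀ x ρ μ ν, covHup Γ h x ρ μ ν = 0) →
      (∀ x ρ κ, covVec Γ v x ρ κ = 0) → ∀ x ρ μ ν, covHdown Γ hc x ρ μ ν = 0) :=
  covariant_derivative_of_space_metric_general n τ h hc v Γ hτsm hhsm hhcsm hvsm hsymm hcv hch
end

section
/- Let (M, τ, h) be a Galilei manifold, v a unit timelike vector field, and ∇̊ the special Galilei connection with coefficients Γ̊^ρ_{μν} = v^ρ ∂_μ τ_ν + (1/2) h^{ρσ}(∂_μ h_{νσ} + ∂_ν h_{μσ} − ∂_σ h_{μν}). Then the Newton–Coriolis form of ∇̊ with respect to v vanishes: 2 h_{ρ[ν} ∇̊_{μ]} v^ρ = 0. -/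
/-- Coefficients of the special Galilei connection determined by a unit timelike vector
field `v`: `Γ̊^ρ_{μν} = v^ρ ∂_μ τ_ν + ½ h^{ρσ}(∂_μ h_{νσ} + ∂_ν h_{μσ} − ∂_σ h_{μν})`. -/
noncomputable def specialGamma {N : ℕ}
    (τ : (Fin N → ℝ) → Fin N → ℝ) (h hc : (Fin N → ℝ) → Fin N → Fin N → ℝ)
    (v : (Fin N → ℝ) → Fin N → ℝ) (x : Fin N → ℝ) (ρ μ ν : Fin N) : ℝ :=
  v x ρ * pd μ (fun y => τ y ν) x +
    (1 / 2) * ∑ σ, h x ρ σ *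
      (pd μ (fun y => hc y ν σ) x + pd ν (fun y => hc y μ σ) x - pd σ (fun y => hc y μ ν) x)

/-!
Lowering the index of `∇̊ v` with `h_{μν}` gives half the Lie derivative of `h_{μν}` along `v`,
a symmetric tensor, so its antisymmetric part `Ω` vanishes. In the contraction
`h_{νρ} Γ̊^ρ_{μλ} v^λ` the term `v^ρ ∂_μ τ_λ` dies since `h_{νρ} v^ρ = 0`, while
`h_{νρ} h^{ρσ} = δ_ν^σ − τ_ν v^σ` leaves Christoffel symbols of the first kind contracted with `v`;
differentiating `h_{νρ} v^ρ = 0` trades each `v^ρ ∂ h_{νρ}` for `−h_{νρ} ∂ v^ρ`.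
-/

open Finset

theorem pd_sum_mul {N : ℕ} {ι : Type*} [Fintype ι] (μ : Fin N) (f g : ι → (Fin N → ℝ) → ℝ)
    (x : Fin N → ℝ) (hf : ∀ i, DifferentiableAt ℝ (f i) x) (hg : ∀ i, DifferentiableAt ℝ (g i) x) :
    pd μ (fun y => ∑ i, f i y * g i y) x = ∑ i, (pd μ (f i) x * g i x + f i x * pd μ (g i) x) := by
  unfold pd
  rw [fderiv_fun_sum (A := fun i y => f i y * g i y) fun i _ => (hf i).mul (hg i),
    _root_.sum_apply]
  refine sum_congr rfl fun i _ => ?_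
  rw [fderiv_fun_mul (hf i) (hg i)]
  simp only [_root_.add_apply, _root_.smul_apply, smul_eq_mul]
  ring

theorem sum_pd_mul_eq_neg_sum_mul_pd {N : ℕ} {ι : Type*} [Fintype ι] (μ : Fin N)
    (f g : ι → (Fin N → ℝ) → ℝ) (x : Fin N → ℝ) (hf : ∀ i, DifferentiableAt ℝ (f i) x)
    (hg : ∀ i, DifferentiableAt ℝ (g i) x) (hfg : ∀ y, ∑ i, f i y * g i y = 0) :
    ∑ i, pd μ (f i) x * g i x = -∑ i, f i x * pd μ (g i) x := by
  have hconst : pd μ (fun y => ∑ i, f i y * g i y) x = 0 := by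
    simp [hfg, pd]
  rw [pd_sum_mul μ f g x hf hg, sum_add_distrib] at hconst
  linarith

section Fields

variable {N : ℕ} {τ : (Fin N → ℝ) → Fin N → ℝ} {h hc : (Fin N → ℝ) → Fin N → Fin N → ℝ}
  {v : (Fin N → ℝ) → Fin N → ℝ} {x : Fin N → ℝ}

/-- Twice the Christoffel symbol of the first kind of `hc`. -/
noncomputable def christoffelFirst (hc : (Fin N → ℝ) → Fin N → Fin N → ℝ) (x : Fin N → ℝ)
    (μ ν σ : Fin N) : ℝ :=
  pd μ (fun y => hc y ν σ) x + pd ν (fun y => hc y μ σ) x - pd σ (fun y => hc y μ ν) x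

noncomputable def lieDerivHdown (v : (Fin N → ℝ) → Fin N → ℝ)
    (hc : (Fin N → ℝ) → Fin N → Fin N → ℝ) (x : Fin N → ℝ) (μ ν : Fin N) : ℝ :=
  ∑ ρ, v x ρ * pd ρ (fun y => hc y μ ν) x + ∑ ρ, hc x ρ ν * pd μ (fun y => v y ρ) x
    + ∑ ρ, hc x μ ρ * pd ν (fun y => v y ρ) x

theorem specialGamma_eq (ρ μ ν : Fin N) :
    specialGamma τ h hc v x ρ μ ν =
      v x ρ * pd μ (fun y => τ y ν) x + (1 / 2) * ∑ σ, h x ρ σ * christoffelFirst hc x μ ν σ :=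
  rfl

theorem pd_hc_comm (hcsymm : ∀ y μ ν, hc y μ ν = hc y ν μ) (ρ μ ν : Fin N) :
    pd ρ (fun y => hc y μ ν) x = pd ρ (fun y => hc y ν μ) x := by
  simp only [hcsymm _ μ ν]

theorem lieDerivHdown_comm (hcsymm : ∀ y μ ν, hc y μ ν = hc y ν μ) (μ ν : Fin N) :
    lieDerivHdown v hc x μ ν = lieDerivHdown v hc x ν μ := by
  simp only [lieDerivHdown, pd_hc_comm hcsymm _ μ ν, hcsymm x _ ν, hcsymm x μ]
  ring

theorem sum_pd_hc_mul (hv : ∀ ρ, DifferentiableAt ℝ (fun y => v y ρ) x)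
    (hhc : ∀ μ ν, DifferentiableAt ℝ (fun y => hc y μ ν) x)
    (hcv : ∀ y μ, ∑ ν, hc y μ ν * v y ν = 0) (μ ν : Fin N) :
    ∑ ρ, pd μ (fun y => hc y ν ρ) x * v x ρ = -∑ ρ, hc x ν ρ * pd μ (fun y => v y ρ) x :=
  sum_pd_mul_eq_neg_sum_mul_pd μ (fun ρ y => hc y ν ρ) (fun ρ y => v y ρ) x (hhc ν) hv
    (fun y => hcv y ν)

theorem sum_specialGamma_mul_hc (hcv : ∀ μ, ∑ ν, hc x μ ν * v x ν = 0)
    (hch : ∀ μ ν, ∑ κ, hc x μ κ * h x κ ν = (if μ = ν then (1 : ℝ) else 0) - τ x μ * v x ν)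
    (μ ν : Fin N) :
    ∑ ρ, (∑ l, specialGamma τ h hc v x ρ μ l * v x l) * hc x ν ρ =
      (1 / 2) * (∑ l, v x l * christoffelFirst hc x μ l ν
        - τ x ν * ∑ l, ∑ σ, v x l * v x σ * christoffelFirst hc x μ l σ) := by
  calc ∑ ρ, (∑ l, specialGamma τ h hc v x ρ μ l * v x l) * hc x ν ρ
      = ∑ l, v x l * (pd μ (fun y => τ y l) x * ∑ ρ, hc x ν ρ * v x ρ
          + (1 / 2) * ∑ σ, (∑ ρ, hc x ν ρ * h x ρ σ) * christoffelFirst hc x μ l σ) := by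
        simp only [specialGamma_eq, sum_mul, mul_sum]
        rw [sum_comm]
        refine sum_congr rfl fun l _ => ?_
        simp only [add_mul, mul_add, sum_add_distrib, sum_mul, mul_sum]
        congr 1
        · exact sum_congr rfl fun ρ _ => by ring
        · rw [sum_comm]
          exact sum_congr rfl fun σ _ => sum_congr rfl fun ρ _ => by ring
    _ = _ := by
        simp only [hcv, hch, sub_mul, ite_mul, one_mul, zero_mul, sum_sub_distrib, sum_ite_eq,
          mem_univ, if_true, mul_zero, zero_add, mul_sub, mul_sum]
        congr 1
        · exact sum_congr rfl fun l _ => by ring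
        · exact sum_congr rfl fun l _ => sum_congr rfl fun σ _ => by ring

theorem sum_sum_mul_christoffelFirst_eq_zero (hv : ∀ ρ, DifferentiableAt ℝ (fun y => v y ρ) x)
    (hhc : ∀ μ ν, DifferentiableAt ℝ (fun y => hc y μ ν) x)
    (hcsymm : ∀ y μ ν, hc y μ ν = hc y ν μ) (hcv : ∀ y μ, ∑ ν, hc y μ ν * v y ν = 0)
    (μ : Fin N) :
    ∑ l, ∑ σ, v x l * v x σ * christoffelFirst hc x μ l σ = 0 := by
  have hsplit : ∑ l, ∑ σ, v x l * v x σ * christoffelFirst hc x μ l σ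
      = ∑ l, v x l * ∑ σ, pd μ (fun y => hc y l σ) x * v x σ
        + (∑ l, ∑ σ, v x l * v x σ * pd l (fun y => hc y μ σ) x
          - ∑ l, ∑ σ, v x l * v x σ * pd σ (fun y => hc y μ l) x) := by
    simp only [christoffelFirst, mul_sum, ← sum_add_distrib, ← sum_sub_distrib]
    exact sum_congr rfl fun l _ => sum_congr rfl fun σ _ => by ring
  have htransport : ∑ l, v x l * ∑ σ, pd μ (fun y => hc y l σ) x * v x σ = 0 := by
    simp only [sum_pd_hc_mul hv hhc hcv, mul_neg, mul_sum, sum_neg_distrib, neg_eq_zero]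
    rw [sum_comm]
    refine sum_eq_zero fun σ _ => ?_
    calc ∑ l, v x l * (hc x l σ * pd μ (fun y => v y σ) x)
        = (∑ l, hc x σ l * v x l) * pd μ (fun y => v y σ) x := by
          rw [sum_mul]
          exact sum_congr rfl fun l _ => by rw [hcsymm x l σ]; ring
      _ = 0 := by rw [hcv x σ, zero_mul]
  rw [hsplit, htransport, zero_add, sub_eq_zero, sum_comm]
  exact sum_congr rfl fun l _ => sum_congr rfl fun σ _ => by ring

theorem sum_mul_christoffelFirst (hv : ∀ ρ, DifferentiableAt ℝ (fun y => v y ρ) x)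
    (hhc : ∀ μ ν, DifferentiableAt ℝ (fun y => hc y μ ν) x)
    (hcsymm : ∀ y μ ν, hc y μ ν = hc y ν μ) (hcv : ∀ y μ, ∑ ν, hc y μ ν * v y ν = 0)
    (μ ν : Fin N) :
    ∑ l, v x l * christoffelFirst hc x μ l ν
      = lieDerivHdown v hc x μ ν - 2 * ∑ ρ, hc x ν ρ * pd μ (fun y => v y ρ) x := by
  have hμ := sum_pd_hc_mul hv hhc hcv μ ν
  have hν := sum_pd_hc_mul hv hhc hcv ν μ
  simp only [pd_hc_comm hcsymm _ ν] at hμ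
  simp only [christoffelFirst, lieDerivHdown, mul_add, mul_sub, sum_add_distrib, sum_sub_distrib]
  simp only [mul_comm (v x _), hcsymm x _ ν, hμ, hν]
  ring

theorem sum_covVec_specialGamma_mul_hc (hv : ∀ ρ, DifferentiableAt ℝ (fun y => v y ρ) x)
    (hhc : ∀ μ ν, DifferentiableAt ℝ (fun y => hc y μ ν) x)
    (hcsymm : ∀ y μ ν, hc y μ ν = hc y ν μ) (hcv : ∀ y μ, ∑ ν, hc y μ ν * v y ν = 0)
    (hch : ∀ μ ν, ∑ κ, hc x μ κ * h x κ ν = (if μ = ν then (1 : ℝ) else 0) - τ x μ * v x ν)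
    (μ ν : Fin N) :
    ∑ ρ, covVec (specialGamma τ h hc v) v x μ ρ * hc x ν ρ = (1 / 2) * lieDerivHdown v hc x μ ν := by
  simp only [covVec, add_mul, sum_add_distrib]
  rw [sum_specialGamma_mul_hc (hcv x) hch, sum_mul_christoffelFirst hv hhc hcsymm hcv,
    sum_sum_mul_christoffelFirst_eq_zero hv hhc hcsymm hcv]
  simp only [mul_comm (pd μ _ x)]
  ring

end Fields

theorem special_connection_newton_coriolis_vanishes_general (n : ℕ)
    (τ : (Fin (n + 1) → ℝ) → Fin (n + 1) → ℝ)
    (h hc : (Fin (n + 1) → ℝ) → Fin (n + 1) → Fin (n + 1) → ℝ)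
    (v : (Fin (n + 1) → ℝ) → Fin (n + 1) → ℝ)
    (hhcsm : ∀ μ ν, ContDiff ℝ (⊤ : ℕ∞) fun x => hc x μ ν)
    (hvsm : ∀ μ, ContDiff ℝ (⊤ : ℕ∞) fun x => v x μ)
    (hcsymm : ∀ x μ ν, hc x μ ν = hc x ν μ)
    (hcv : ∀ x μ, ∑ ν, hc x μ ν * v x ν = 0)
    (hch : ∀ x μ ν, ∑ κ, hc x μ κ * h x κ ν = (if μ = ν then (1 : ℝ) else 0) - τ x μ * v x ν) :
    ∀ x μ ν,
      (∑ ρ, covVec (fun x ρ μ ν => specialGamma τ h hc v x ρ μ ν) v x μ ρ * hc x ν ρ)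
        - (∑ ρ, covVec (fun x ρ μ ν => specialGamma τ h hc v x ρ μ ν) v x ν ρ * hc x μ ρ)
        = 0 := by
  intro x μ ν
  have hv : ∀ ρ, DifferentiableAt ℝ (fun y => v y ρ) x := fun ρ =>
    ((hvsm ρ).differentiable (by simp)).differentiableAt
  have hhc : ∀ μ ν, DifferentiableAt ℝ (fun y => hc y μ ν) x := fun μ ν =>
    ((hhcsm μ ν).differentiable (by simp)).differentiableAt
  rw [sum_covVec_specialGamma_mul_hc hv hhc hcsymm hcv (hch x),
    sum_covVec_specialGamma_mul_hc hv hhc hcsymm hcv (hch x), lieDerivHdown_comm hcsymm, sub_self]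

/-- On a Galilei manifold with unit timelike vector field `v`, the
Newton–Coriolis form `Ω_{μν} = 2 (∇̊_{[μ} v^ρ) h_{ν]ρ}` of the special Galilei connection
`Γ̊` with respect to `v` vanishes (in local coordinates). -/
theorem special_connection_newton_coriolis_vanishes (n : ℕ)
    (τ : (Fin (n + 1) → ℝ) → Fin (n + 1) → ℝ)
    (h hc : (Fin (n + 1) → ℝ) → Fin (n + 1) → Fin (n + 1) → ℝ)
    (v : (Fin (n + 1) → ℝ) → Fin (n + 1) → ℝ)
    (hτsm : ∀ ν, ContDiff ℝ (⊤ : ℕ∞) fun x => τ x ν)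
    (hhsm : ∀ μ ν, ContDiff ℝ (⊤ : ℕ∞) fun x => h x μ ν)
    (hhcsm : ∀ μ ν, ContDiff ℝ (⊤ : ℕ∞) fun x => hc x μ ν)
    (hvsm : ∀ μ, ContDiff ℝ (⊤ : ℕ∞) fun x => v x μ)
    (hsymm : ∀ x μ ν, h x μ ν = h x ν μ)
    (hcsymm : ∀ x μ ν, hc x μ ν = hc x ν μ)
    (hτh : ∀ x σ, ∑ ρ, τ x ρ * h x ρ σ = 0)
    (hτv : ∀ x, ∑ ρ, τ x ρ * v x ρ = 1)
    (hcv : ∀ x μ, ∑ ν, hc x μ ν * v x ν = 0)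
    (hch : ∀ x μ ν, ∑ κ, hc x μ κ * h x κ ν = (if μ = ν then (1 : ℝ) else 0) - τ x μ * v x ν) :
    ∀ x μ ν,
      (∑ ρ, covVec (fun x ρ μ ν => specialGamma τ h hc v x ρ μ ν) v x μ ρ * hc x ν ρ)
        - (∑ ρ, covVec (fun x ρ μ ν => specialGamma τ h hc v x ρ μ ν) v x ν ρ * hc x μ ρ)
        = 0 :=
  special_connection_newton_coriolis_vanishes_general n τ h hc v hhcsm hvsm hcsymm hcv hch
end

section
/- Let (M, τ, h) be a Galilei manifold, v a unit timelike vector field, and ∇', ∇ two affine connections with ∇'τ = ∇τ, ∇'h = ∇h, equal torsion, and equal Newton–Coriolis form with respect to v. Then ∇' = ∇. -/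
/-- The Newton–Coriolis form `Ω_{μν} = 2 (∇_{[μ} v^ρ) h_{ν]ρ}` of a connection `Γ` with
respect to a unit timelike vector field `v` (indices lowered with `h_v = hc`). -/
noncomputable def ncForm {N : ℕ} (Γ : (Fin N → ℝ) → Fin N → Fin N → Fin N → ℝ)
    (hc : (Fin N → ℝ) → Fin N → Fin N → ℝ) (v : (Fin N → ℝ) → Fin N → ℝ)
    (x : Fin N → ℝ) (μ ν : Fin N) : ℝ :=
  (∑ ρ, covVec Γ v x μ ρ * hc x ν ρ) - ∑ ρ, covVec Γ v x ν ρ * hc x μ ρ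

/-- On a Galilei manifold with unit timelike vector field `v`, two affine
connections with the same `∇τ`, the same `∇h`, the same torsion and the same Newton–Coriolis
form with respect to `v` are equal (uniqueness part of the classification theorem). -/
theorem connection_classification_uniqueness (n : ℕ)
    (τ : (Fin (n + 1) → ℝ) → Fin (n + 1) → ℝ)
    (h hc : (Fin (n + 1) → ℝ) → Fin (n + 1) → Fin (n + 1) → ℝ)
    (v : (Fin (n + 1) → ℝ) → Fin (n + 1) → ℝ)
    (Γ Γ' : (Fin (n + 1) → ℝ) → Fin (n + 1) → Fin (n + 1) → Fin (n + 1) → ℝ)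
    (hτsm : ∀ ν, ContDiff ℝ (⊤ : ℕ∞) fun x => τ x ν)
    (hhsm : ∀ μ ν, ContDiff ℝ (⊤ : ℕ∞) fun x => h x μ ν)
    (hhcsm : ∀ μ ν, ContDiff ℝ (⊤ : ℕ∞) fun x => hc x μ ν)
    (hvsm : ∀ μ, ContDiff ℝ (⊤ : ℕ∞) fun x => v x μ)
    (hsymm : ∀ x μ ν, h x μ ν = h x ν μ)
    (hcsymm : ∀ x μ ν, hc x μ ν = hc x ν μ)
    (hτh : ∀ x σ, ∑ ρ, τ x ρ * h x ρ σ = 0)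
    (hτv : ∀ x, ∑ ρ, τ x ρ * v x ρ = 1)
    (hcv : ∀ x μ, ∑ ν, hc x μ ν * v x ν = 0)
    (hch : ∀ x μ ν, ∑ κ, hc x μ κ * h x κ ν = (if μ = ν then (1 : ℝ) else 0) - τ x μ * v x ν)
    (heqτ : ∀ x μ ν, covTau Γ' τ x μ ν = covTau Γ τ x μ ν)
    (heqh : ∀ x ρ μ ν, covHup Γ' h x ρ μ ν = covHup Γ h x ρ μ ν)
    (heqT : ∀ x ρ μ ν, Γ' x ρ μ ν - Γ' x ρ ν μ = Γ x ρ μ ν - Γ x ρ ν μ)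
    (heqΩ : ∀ x μ ν, ncForm Γ' hc v x μ ν = ncForm Γ hc v x μ ν) :
    ∀ x ρ μ ν, Γ' x ρ μ ν = Γ x ρ μ ν := by
  -- It suffices to show the difference tensor S = Γ' - Γ vanishes.
  suffices hmain : ∀ x a b c, Γ' x a b c - Γ x a b c = 0 by
    intro x ρ μ ν; have := hmain x ρ μ ν; linarith
  intro x
  set S : Fin (n+1) → Fin (n+1) → Fin (n+1) → ℝ :=
    fun a b c => Γ' x a b c - Γ x a b c with hSdef
  show ∀ a b c, S a b c = 0
  -- (1) τ-contraction of S vanishes (from equality of ∇τ)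
  have hS_tau : ∀ b c, ∑ l, τ x l * S l b c = 0 := by
    intro b c
    have h1 := heqτ x b c
    simp only [covTau] at h1
    have h3 : ∑ l, τ x l * S l b c
        = (∑ l, Γ' x l b c * τ x l) - ∑ l, Γ x l b c * τ x l := by
      rw [← Finset.sum_sub_distrib]
      exact Finset.sum_congr rfl (fun l _ => by simp only [hSdef]; ring)
    rw [h3]; linarith
  -- (2) S is symmetric in its lower indices (equal torsion)
  have hS_sym : ∀ a b c, S a b c = S a c b := by
    intro a b c
    have := heqT x a b c
    simp only [hSdef]
    linarith
  -- (3) the h-symmetrized part of S vanishes (from equality of ∇h)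
  have hS_h : ∀ r a b, (∑ l, S a r l * h x l b) + ∑ l, S b r l * h x a l = 0 := by
    intro r a b
    have h1 := heqh x r a b
    simp only [covHup] at h1
    have h2 : (∑ l, S a r l * h x l b)
        = (∑ l, Γ' x a r l * h x l b) - ∑ l, Γ x a r l * h x l b := by
      rw [← Finset.sum_sub_distrib]
      exact Finset.sum_congr rfl (fun l _ => by simp only [hSdef]; ring)
    have h3 : (∑ l, S b r l * h x a l)
        = (∑ l, Γ' x b r l * h x a l) - ∑ l, Γ x b r l * h x a l := by
      rw [← Finset.sum_sub_distrib]
      exact Finset.sum_congr rfl (fun l _ => by simp only [hSdef]; ring)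
    rw [h2, h3]; linarith
  -- v-contraction A and its hc-lowered version B
  set A : Fin (n+1) → Fin (n+1) → ℝ := fun b r => ∑ l, S r b l * v x l with hAdef
  set B : Fin (n+1) → Fin (n+1) → ℝ := fun b c => ∑ r, A b r * hc x c r with hBdef
  -- (4) B is symmetric (equal Newton–Coriolis forms)
  have hB_sym : ∀ b c, B b c = B c b := by
    intro b c
    have h1 := heqΩ x b c
    simp only [ncForm] at h1
    have hcov : ∀ m r, covVec Γ' v x m r = covVec Γ v x m r + A m r := by
      intro m r
      simp only [covVec, hAdef]
      have h2 : ∑ l, S r m l * v x l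
          = (∑ l, Γ' x r m l * v x l) - ∑ l, Γ x r m l * v x l := by
        rw [← Finset.sum_sub_distrib]
        exact Finset.sum_congr rfl (fun l _ => by simp only [hSdef]; ring)
      rw [h2]; ring
    have e1 : ∀ m c', (∑ r, covVec Γ' v x m r * hc x c' r)
        = (∑ r, covVec Γ v x m r * hc x c' r) + B m c' := by
      intro m c'
      simp only [hBdef, hAdef]
      rw [← Finset.sum_add_distrib]
      exact Finset.sum_congr rfl (fun r _ => by rw [hcov m r]; ring)
    rw [e1 b c, e1 c b] at h1
    linarith
  -- the lowered difference tensor Tl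
  set Tl : Fin (n+1) → Fin (n+1) → Fin (n+1) → ℝ :=
    fun k b c => ∑ l, hc x k l * S l b c with hTldef
  have hTl_sym : ∀ k b c, Tl k b c = Tl k c b := by
    intro k b c
    exact Finset.sum_congr rfl (fun l _ => by rw [hS_sym l b c])
  -- double contraction of condition (3) with hc ⊗ hc
  have hDD : ∀ r k s, (∑ a, hc x k a * ∑ b, hc x s b * (∑ l, S a r l * h x l b))
      = Tl k r s - τ x s * B r k := by
    intro r k s
    have step1 : ∀ a, (∑ b, hc x s b * (∑ l, S a r l * h x l b))
        = S a r s - τ x s * A r a := by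
      intro a
      have swap : (∑ b, hc x s b * (∑ l, S a r l * h x l b))
          = ∑ l, S a r l * (∑ b, hc x s b * h x b l) := by
        simp only [Finset.mul_sum]
        rw [Finset.sum_comm]
        exact Finset.sum_congr rfl fun l _ => Finset.sum_congr rfl fun b _ => by
          rw [hsymm x l b]; ring
      rw [swap]
      have inner : ∀ l, (∑ b, hc x s b * h x b l)
          = (if s = l then (1:ℝ) else 0) - τ x s * v x l := hch x s
      calc (∑ l, S a r l * (∑ b, hc x s b * h x b l))
          = ∑ l, ((if s = l then S a r l else 0) - τ x s * (S a r l * v x l)) := by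
            refine Finset.sum_congr rfl fun l _ => ?_
            rw [inner l]
            by_cases hl : s = l <;> simp [hl] <;> ring
        _ = (∑ l, if s = l then S a r l else 0) - τ x s * ∑ l, S a r l * v x l := by
            rw [Finset.sum_sub_distrib, Finset.mul_sum]
        _ = S a r s - τ x s * A r a := by
            rw [Finset.sum_ite_eq]
            simp [hAdef]
    calc (∑ a, hc x k a * ∑ b, hc x s b * (∑ l, S a r l * h x l b))
        = ∑ a, (hc x k a * S a r s - τ x s * (A r a * hc x k a)) := by
          refine Finset.sum_congr rfl fun a _ => ?_
          rw [step1 a]; ring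
      _ = (∑ a, hc x k a * S a r s) - τ x s * ∑ a, A r a * hc x k a := by
          rw [Finset.sum_sub_distrib, Finset.mul_sum]
      _ = Tl k r s - τ x s * B r k := rfl
  -- key relation from (3): Tl k r s + Tl s r k = τ s B r k + τ k B r s
  have h_star : ∀ r k s, Tl k r s + Tl s r k = τ x s * B r k + τ x k * B r s := by
    intro r k s
    have hzero : (∑ a, hc x k a * ∑ b, hc x s b *
        ((∑ l, S a r l * h x l b) + (∑ l, S b r l * h x a l))) = 0 := by
      refine Finset.sum_eq_zero fun a _ => ?_
      rw [Finset.sum_eq_zero fun b _ => by rw [hS_h r a b, mul_zero], mul_zero]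
    have hsplit : (∑ a, hc x k a * ∑ b, hc x s b *
        ((∑ l, S a r l * h x l b) + (∑ l, S b r l * h x a l)))
        = (∑ a, hc x k a * ∑ b, hc x s b * (∑ l, S a r l * h x l b))
          + ∑ a, hc x k a * ∑ b, hc x s b * (∑ l, S b r l * h x a l) := by
      rw [← Finset.sum_add_distrib]
      refine Finset.sum_congr rfl fun a _ => ?_
      have hin : (∑ b, hc x s b * ((∑ l, S a r l * h x l b) + (∑ l, S b r l * h x a l)))
          = (∑ b, hc x s b * (∑ l, S a r l * h x l b))
            + ∑ b, hc x s b * (∑ l, S b r l * h x a l) := by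
        rw [← Finset.sum_add_distrib]
        exact Finset.sum_congr rfl fun b _ => mul_add _ _ _
      rw [hin, mul_add]
    have hsecond : (∑ a, hc x k a * ∑ b, hc x s b * (∑ l, S b r l * h x a l))
        = Tl s r k - τ x k * B r s := by
      have swap2 : (∑ a, hc x k a * ∑ b, hc x s b * (∑ l, S b r l * h x a l))
          = ∑ b, hc x s b * ∑ a, hc x k a * (∑ l, S b r l * h x l a) := by
        simp only [Finset.mul_sum]
        rw [Finset.sum_comm]
        exact Finset.sum_congr rfl fun b _ => Finset.sum_congr rfl fun a _ =>
          Finset.sum_congr rfl fun l _ => by rw [hsymm x a l]; ring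
      rw [swap2]
      exact hDD r s k
    have hfirst := hDD r k s
    rw [hsplit, hfirst, hsecond] at hzero
    linarith
  -- conclude Tl k r s = τ k * B r s
  have hTl_eq : ∀ k r s, Tl k r s = τ x k * B r s := by
    intro k r s
    have e1 := h_star r k s
    have e2 := h_star s k r
    have e3 := h_star k s r
    have s1 := hTl_sym k s r
    have s2 := hTl_sym r s k
    have s3 := hTl_sym s k r
    have b1 := hB_sym s k
    have b2 := hB_sym s r
    have b3 := hB_sym r k
    linear_combination (e1 + e2 - e3 - s1 - s2 + s3
      + τ x r * b1 + τ x k * b2 + τ x s * b3) / 2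
  -- finally: S = v ⊗ (τ·S) + h·(hc·S) = 0 + h·(τ ⊗ B) = (τ·h) B = 0
  intro a b c
  have e0 : S a b c = ∑ r, (if r = a then (1:ℝ) else 0) * S r b c := by
    rw [Finset.sum_congr rfl fun r (_ : r ∈ Finset.univ) => ite_mul (r = a) 1 0 (S r b c)]
    simp
  have e1 : ∀ r, (if r = a then (1:ℝ) else 0)
      = (∑ κ, hc x r κ * h x κ a) + τ x r * v x a := by
    intro r; have := hch x r a; linarith
  rw [e0]
  calc (∑ r, (if r = a then (1:ℝ) else 0) * S r b c)
      = ∑ r, ((∑ κ, hc x r κ * h x κ a) * S r b c + v x a * (τ x r * S r b c)) := by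
        refine Finset.sum_congr rfl fun r _ => ?_
        rw [e1 r]; ring
    _ = (∑ r, (∑ κ, hc x r κ * h x κ a) * S r b c) + v x a * ∑ r, τ x r * S r b c := by
        rw [Finset.sum_add_distrib, Finset.mul_sum]
    _ = ∑ r, (∑ κ, hc x r κ * h x κ a) * S r b c := by rw [hS_tau b c]; ring
    _ = ∑ κ, h x κ a * (∑ r, hc x κ r * S r b c) := by
        simp only [Finset.sum_mul, Finset.mul_sum]
        rw [Finset.sum_comm]
        exact Finset.sum_congr rfl fun κ _ => Finset.sum_congr rfl fun r _ => by
          rw [hcsymm x r κ]; ring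
    _ = ∑ κ, h x κ a * (τ x κ * B b c) := by
        refine Finset.sum_congr rfl fun κ _ => ?_
        have hid : (∑ r, hc x κ r * S r b c) = Tl κ b c := rfl
        rw [hid, hTl_eq κ b c]
    _ = B b c * ∑ κ, τ x κ * h x κ a := by
        rw [Finset.mul_sum]
        exact Finset.sum_congr rfl fun κ _ => by ring
    _ = 0 := by rw [hτh x a, mul_zero]
end
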